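/- Let n ≥ 2 be an integer and let μ > 0, r > 0 and ω be real numbers. The curves z_j(t) = r·e^{i(ωt + 2πj/n)} for j = 0, 1, …, n−1 together with z_n(t) = 0 satisfy the system z_j'' = −(z_j − z_n)/|z_j − z_n|² + μ·∑_{k ≠ j, k ≠ n} (z_k − z_j)/|z_k − z_j|² for all t ∈ ℝ and all j = 0, …, n−1 if and only if r²ω² = 1 + μ(n−1)/2. -/

import Mathlib

open Real Finset Complex

lemma pair_inv (u : ℂ) (h0 : u ≠ 0) (h1 : u ≠ 1) :
    (u - 1)⁻¹ + (u⁻¹ - 1)⁻¹ = -1 := by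
  have h2 : u - 1 ≠ 0 := sub_ne_zero.mpr h1
  have h4 : (1:ℂ) - u ≠ 0 := sub_ne_zero.mpr (Ne.symm h1)
  have h3 : u⁻¹ - 1 = (1 - u) * u⁻¹ := by field_simp
  rw [h3, mul_inv, inv_inv]
  field_simp
  ring

lemma root_sum (n : ℕ) (hn : 2 ≤ n) (j : ℕ) (hj : j < n) {ζ : ℂ}
    (hζ : IsPrimitiveRoot ζ n) :
    ∑ k ∈ (Finset.range n).erase j, (ζ ^ ((j:ℤ) - k) - 1)⁻¹ = -((n:ℂ) - 1) / 2 := by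
  have hn0 : 0 < n := by omega
  have hζ0 : ζ ≠ 0 := hζ.ne_zero (by omega)
  -- the involution
  set g : ℕ → ℕ := fun k => (2 * j + n - k) % n with hg
  have hgmem : ∀ k ∈ (Finset.range n).erase j, g k ∈ (Finset.range n).erase j := by
    intro k hk
    rw [Finset.mem_erase, Finset.mem_range] at hk ⊢
    obtain ⟨hkj, hkn⟩ := hk
    refine ⟨?_, Nat.mod_lt _ hn0⟩
    intro hcontra
    obtain ⟨q, hq⟩ : ∃ q, (2*j+n-k) % n + n*q = 2*j+n-k := ⟨_, Nat.mod_add_div _ _⟩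
    rw [hg] at hcontra
    simp only at hcontra
    rw [hcontra] at hq
    match q with
    | 0 => omega
    | 1 => omega
    | (q+2) =>
      have h2n : 2*n ≤ n*(q+2) := by nlinarith
      omega
  -- u values
  have hune : ∀ k ∈ (Finset.range n).erase j, ζ ^ ((j:ℤ) - k) ≠ 1 := by
    intro k hk
    rw [Finset.mem_erase, Finset.mem_range] at hk
    intro h
    rw [hζ.zpow_eq_one_iff_dvd] at h
    have := Int.eq_zero_of_abs_lt_dvd h (by rw [abs_lt]; omega)
    omega
  have hmul1 : ∀ k ∈ (Finset.range n).erase j,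
      ζ ^ ((j:ℤ) - k) * ζ ^ ((j:ℤ) - g k) = 1 := by
    intro k hk
    rw [Finset.mem_erase, Finset.mem_range] at hk
    rw [← zpow_add₀ hζ0, hζ.zpow_eq_one_iff_dvd]
    obtain ⟨q, hq⟩ : ∃ q, (2*j+n-k) % n + n*q = 2*j+n-k := ⟨_, Nat.mod_add_div _ _⟩
    have hcast : ((g k : ℕ) : ℤ) = 2*(j:ℤ) + n - k - n * q := by
      rw [hg]; simp only; omega
    refine ⟨(q:ℤ) - 1, ?_⟩
    rw [hcast]; ring
  have hginv : ∀ k ∈ (Finset.range n).erase j, g (g k) = k := by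
    intro k hk
    rw [Finset.mem_erase, Finset.mem_range] at hk
    obtain ⟨q, hq⟩ : ∃ q, (2*j+n-k) % n + n*q = 2*j+n-k := ⟨_, Nat.mod_add_div _ _⟩
    have h1 : 2*j + n - g k = k + n*q := by rw [hg]; simp only; omega
    rw [hg]; simp only; rw [h1, Nat.add_mul_mod_self_left, Nat.mod_eq_of_lt hk.2]
  -- key: shifted sum is zero
  have key : ∑ k ∈ (Finset.range n).erase j,
      ((ζ ^ ((j:ℤ) - k) - 1)⁻¹ + 1/2) = 0 := by
    refine Finset.sum_involution (fun k _ => g k) ?_ ?_ (fun k hk => hgmem k hk) ?_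
    · intro k hk
      have h1 := hmul1 k hk
      have h2 := hune k hk
      have hz1 : ζ ^ ((j:ℤ) - k) ≠ 0 := zpow_ne_zero _ hζ0
      have hinv : ζ ^ ((j:ℤ) - (g k : ℕ)) = (ζ ^ ((j:ℤ) - k))⁻¹ :=
        (inv_eq_of_mul_eq_one_right h1).symm
      rw [hinv]
      have := pair_inv (ζ ^ ((j:ℤ) - k)) hz1 h2
      linear_combination this
    · intro k hk hne heq
      apply hne
      have h1 := hmul1 k hk
      rw [heq] at h1
      have h2 := hune k hk
      have hsq : (ζ ^ ((j:ℤ) - k) - 1) * (ζ ^ ((j:ℤ) - k) + 1) = 0 := by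
        linear_combination h1
      rcases mul_eq_zero.mp hsq with h | h
      · exact absurd (by linear_combination h) h2
      · have hval : ζ ^ ((j:ℤ) - k) = -1 := by linear_combination h
        rw [hval]
        norm_num
    · intro k hk
      exact hginv k hk
  rw [Finset.sum_add_distrib, Finset.sum_const, Finset.card_erase_of_mem
    (Finset.mem_range.mpr hj), Finset.card_range] at key
  have hcard : ((n - 1 : ℕ) : ℂ) = (n : ℂ) - 1 := by
    have : (1:ℕ) ≤ n := by omega
    push_cast [Nat.cast_sub this]
    ring
  rw [eq_div_iff (two_ne_zero)]
  have := key
  rw [nsmul_eq_mul, hcard] at this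
  linear_combination 2 * this

lemma ngon_deriv (r ω : ℝ) (c : ℂ) (t : ℝ) :
    deriv (deriv (fun s : ℝ => (r:ℂ) * Complex.exp (Complex.I * ((ω:ℂ) * (s:ℂ) + c)))) t
      = -((ω:ℂ)^2) * ((r:ℂ) * Complex.exp (Complex.I * ((ω:ℂ) * (t:ℂ) + c))) := by
  have h : ∀ s : ℝ, HasDerivAt (fun s : ℝ => (r:ℂ) * Complex.exp (Complex.I * ((ω:ℂ) * (s:ℂ) + c)))
      (Complex.I * (ω:ℂ) * ((r:ℂ) * Complex.exp (Complex.I * ((ω:ℂ) * (s:ℂ) + c)))) s := by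
    intro s
    have h1 : HasDerivAt (fun w : ℂ => (r:ℂ) * Complex.exp (Complex.I * ((ω:ℂ) * w + c)))
        (Complex.I * (ω:ℂ) * ((r:ℂ) * Complex.exp (Complex.I * ((ω:ℂ) * (s:ℂ) + c)))) (s:ℂ) := by
      have h2 := ((((hasDerivAt_id ((s:ℝ):ℂ)).const_mul ((ω:ℂ))).add_const c).const_mul
        Complex.I).cexp.const_mul (r:ℂ)
      simp only [id_eq] at h2
      refine h2.congr_deriv ?_
      ring
    exact h1.comp_ofReal
  have hd1 : deriv (fun s : ℝ => (r:ℂ) * Complex.exp (Complex.I * ((ω:ℂ) * (s:ℂ) + c)))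
      = fun s : ℝ => Complex.I * (ω:ℂ) * ((r:ℂ) * Complex.exp (Complex.I * ((ω:ℂ) * (s:ℂ) + c))) :=
    funext fun s => (h s).deriv
  rw [hd1, ((h t).const_mul (Complex.I * (ω:ℂ))).deriv]
  have := Complex.I_sq
  linear_combination ((ω:ℂ)^2 * ((r:ℂ) * Complex.exp (Complex.I * ((ω:ℂ) * (t:ℂ) + c)))) * this

theorem ngon_relative_equilibrium (n : ℕ) (hn : 2 ≤ n) (μ r ω : ℝ)
    (hμ : 0 < μ) (hr : 0 < r)
    (z : ℕ → ℝ → ℂ)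
    (hz : ∀ j < n, ∀ t : ℝ,
      z j t = (r : ℂ) * Complex.exp (Complex.I * (ω * t + 2 * Real.pi * j / n)))
    (hzn : ∀ t : ℝ, z n t = 0) :
    (∀ t : ℝ, ∀ j < n,
        deriv (deriv (z j)) t
          = -((z j t - z n t) / (((‖z j t - z n t‖ : ℝ) : ℂ) ^ 2))
            + (μ : ℂ) * ∑ k ∈ (Finset.range n).erase j,
                (z k t - z j t) / (((‖z k t - z j t‖ : ℝ) : ℂ) ^ 2))
      ↔ r ^ 2 * ω ^ 2 = 1 + μ * (n - 1) / 2 := by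
  have hn0 : n ≠ 0 := by omega
  have hζ : IsPrimitiveRoot (Complex.exp (2 * (π:ℂ) * Complex.I / n)) n :=
    Complex.isPrimitiveRoot_exp n hn0
  set ζ : ℂ := Complex.exp (2 * (π:ℂ) * Complex.I / n) with hζdef
  have hζ0 : ζ ≠ 0 := Complex.exp_ne_zero _
  have hr0 : (r:ℂ) ≠ 0 := ofReal_ne_zero.mpr hr.ne'
  have hζconj : (starRingEnd ℂ) ζ = ζ⁻¹ := by
    rw [hζdef, ← Complex.exp_conj, ← Complex.exp_neg]
    congr 1
    simp only [map_div₀, map_mul, Complex.conj_I, Complex.conj_ofReal, map_ofNat,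
      Complex.conj_natCast]
    ring
  have habs : ∀ w : ℂ, (((‖w‖ : ℝ) : ℂ))^2 = w * (starRingEnd ℂ) w := by
    intro w
    rw [← Complex.ofReal_pow, Complex.sq_norm, Complex.mul_conj]
  have hzk : ∀ k, k < n → ∀ t : ℝ,
      z k t = ((r:ℂ) * Complex.exp (Complex.I * ((ω:ℂ) * (t:ℂ)))) * ζ ^ k := by
    intro k hk t
    have hstep : ((r:ℂ) * Complex.exp (Complex.I * ((ω:ℂ) * (t:ℂ)))) * ζ ^ k
        = (r:ℂ) * Complex.exp (Complex.I * ((ω:ℂ) * (t:ℂ)) + (k:ℂ) * (2 * (π:ℂ) * Complex.I / n)) := by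
      rw [hζdef, ← Complex.exp_nat_mul, Complex.exp_add]
      ring
    rw [hz k hk t, hstep]
    congr 2
    ring
  have main : ∀ (t : ℝ) (j : ℕ), j < n →
      ((deriv (deriv (z j)) t
          = -((z j t - z n t) / (((‖z j t - z n t‖ : ℝ) : ℂ) ^ 2))
            + (μ : ℂ) * ∑ k ∈ (Finset.range n).erase j,
                (z k t - z j t) / (((‖z k t - z j t‖ : ℝ) : ℂ) ^ 2))
        ↔ r ^ 2 * ω ^ 2 = 1 + μ * (n - 1) / 2) := by
    intro t j hj
    set A : ℂ := (r:ℂ) * Complex.exp (Complex.I * ((ω:ℂ) * (t:ℂ))) with hA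
    have hA0 : A ≠ 0 := mul_ne_zero hr0 (Complex.exp_ne_zero _)
    have hAA : A * (starRingEnd ℂ) A = (r:ℂ)^2 := by
      rw [hA, map_mul, Complex.conj_ofReal, ← Complex.exp_conj]
      have hcarg : (starRingEnd ℂ) (Complex.I * ((ω:ℂ) * (t:ℂ))) =
          -(Complex.I * ((ω:ℂ) * (t:ℂ))) := by
        simp only [map_mul, Complex.conj_I, Complex.conj_ofReal]
        ring
      rw [hcarg]
      calc (r:ℂ) * Complex.exp (Complex.I * ((ω:ℂ) * (t:ℂ))) *
            ((r:ℂ) * Complex.exp (-(Complex.I * ((ω:ℂ) * (t:ℂ)))))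
          = (r:ℂ)^2 * (Complex.exp (Complex.I * ((ω:ℂ) * (t:ℂ))) *
            Complex.exp (-(Complex.I * ((ω:ℂ) * (t:ℂ))))) := by ring
        _ = (r:ℂ)^2 := by rw [← Complex.exp_add, add_neg_cancel, Complex.exp_zero, mul_one]
    have hconjA2 : (starRingEnd ℂ) A = (r:ℂ)^2 / A := by
      rw [eq_div_iff hA0]
      linear_combination hAA
    have hzj : z j t = A * ζ ^ j := hzk j hj t
    have hzj0 : z j t ≠ 0 := by
      rw [hzj]; exact mul_ne_zero hA0 (pow_ne_zero _ hζ0)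
    have hzjconj : z j t * (starRingEnd ℂ) (z j t) = (r:ℂ)^2 := by
      rw [hzj, map_mul, map_pow, hζconj, inv_pow]
      calc A * ζ^j * ((starRingEnd ℂ) A * (ζ^j)⁻¹)
          = (A * (starRingEnd ℂ) A) * (ζ^j * (ζ^j)⁻¹) := by ring
        _ = (r:ℂ)^2 := by
            rw [hAA, mul_inv_cancel₀ (pow_ne_zero _ hζ0), mul_one]
    -- second derivative
    have hzfun : z j = fun s : ℝ => (r:ℂ) * Complex.exp (Complex.I *
        ((ω:ℂ) * (s:ℂ) + 2 * (π:ℂ) * (j:ℂ) / (n:ℂ))) := funext fun s => hz j hj s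
    have hLHS : deriv (deriv (z j)) t = -((ω:ℂ)^2) * z j t := by
      conv_lhs => rw [hzfun]
      rw [ngon_deriv r ω (2 * (π:ℂ) * (j:ℂ) / (n:ℂ)) t, ← hz j hj t]
    -- individual force terms
    have hterm : ∀ k ∈ (Finset.range n).erase j,
        (z k t - z j t) / (((‖z k t - z j t‖ : ℝ) : ℂ))^2
          = (z j t / (r:ℂ)^2) * (ζ ^ ((j:ℤ) - k) - 1)⁻¹ := by
      intro k hk
      rw [Finset.mem_erase, Finset.mem_range] at hk
      have hzkE : z k t = A * ζ ^ k := by rw [hzk k hk.2 t, ← hA]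
      have hne : ζ^k ≠ ζ^j := by
        intro h
        have h1 : ζ ^ ((k:ℤ) - j) = 1 := by
          rw [zpow_sub₀ hζ0, zpow_natCast, zpow_natCast, h]
          exact div_self (pow_ne_zero _ hζ0)
        rw [hζ.zpow_eq_one_iff_dvd] at h1
        have := Int.eq_zero_of_abs_lt_dvd h1 (by rw [abs_lt]; omega)
        omega
      have hw0 : z k t - z j t ≠ 0 := by
        rw [hzkE, hzj, ← mul_sub]
        exact mul_ne_zero hA0 (sub_ne_zero.mpr hne)
      have hj0 : ζ^j ≠ 0 := pow_ne_zero _ hζ0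
      have hk0 : ζ^k ≠ 0 := pow_ne_zero _ hζ0
      have h3 : ζ^j / ζ^k - 1 ≠ 0 := by
        rw [sub_ne_zero]
        intro h
        apply hne
        field_simp at h
        exact h.symm
      have hconjw : (starRingEnd ℂ) (z k t - z j t)
          = ((r:ℂ)^2 / A) * ((ζ^k)⁻¹ - (ζ^j)⁻¹) := by
        rw [hzkE, hzj, map_sub, map_mul, hconjA2, map_mul, hconjA2, map_pow, map_pow,
          hζconj, inv_pow, inv_pow]
        ring
      have hinv0 : (ζ^k)⁻¹ - (ζ^j)⁻¹ ≠ 0 := by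
        rw [sub_ne_zero]
        intro h
        exact hne (by rw [← inv_inv (ζ^k), h, inv_inv])
      rw [habs, hconjw, div_mul_eq_div_div, div_self hw0, one_div]
      rw [hzj, zpow_sub₀ hζ0, zpow_natCast, zpow_natCast]
      field_simp
    have hsum : ∑ k ∈ (Finset.range n).erase j,
        (z k t - z j t) / (((‖z k t - z j t‖ : ℝ) : ℂ))^2
          = (z j t / (r:ℂ)^2) * (-((n:ℂ) - 1) / 2) := by
      rw [Finset.sum_congr rfl hterm, ← Finset.mul_sum, root_sum n hn j hj hζ]
    -- assemble
    rw [hLHS, hzn t, sub_zero, habs (z j t), hsum]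
    have hfact : -(z j t / (z j t * (starRingEnd ℂ) (z j t)))
          + (μ:ℂ) * (z j t / (r:ℂ)^2 * (-((n:ℂ) - 1) / 2))
        = ((-1 - (μ:ℂ) * ((n:ℂ) - 1) / 2) / (r:ℂ)^2) * z j t := by
      rw [hzjconj]
      have : ((r:ℂ))^2 ≠ 0 := pow_ne_zero _ hr0
      field_simp
      ring
    rw [hfact]
    rw [mul_left_inj' hzj0]
    have hcast1 : (-((ω:ℂ)^2)) = ((-(ω^2) : ℝ) : ℂ) := by push_cast; ring
    have hcast2 : ((-1 - (μ:ℂ) * ((n:ℂ) - 1) / 2) / (r:ℂ)^2)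
        = (((-1 - μ * ((n:ℝ) - 1) / 2) / r^2 : ℝ) : ℂ) := by push_cast; ring
    rw [hcast1, hcast2, Complex.ofReal_inj]
    rw [eq_div_iff (by positivity : (r:ℝ)^2 ≠ 0)]
    constructor <;> intro h <;> nlinarith [h]
  constructor
  · intro H
    exact (main 0 0 (by omega)).mp (H 0 0 (by omega))
  · intro H t j hj
    exact (main t j hj).mpr H
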